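/- arXiv:1711.05844 — 3 statements merged into one kernel-verified Lean document; each statement's English description precedes it below -/
import Mathlib

section
/- If a finite simple graph Γ is bi-dismantlable and a vertex v is bi-dominated in Γ by some vertex u, then the induced subgraph Γ \ {v} is bi-dismantlable. -/
/-- `v` is bi-dominated by `u` within the induced subgraph on `s`:
every neighbour of `v` in `s` is a neighbour of `u`. -/
def BiDominatedIn {V : Type*} (G : SimpleGraph V) (s : Finset V) (v u : V) : Prop :=
  v ∈ s ∧ u ∈ s ∧ v ≠ u ∧ ∀ x ∈ s, G.Adj v x → G.Adj u x

/-- The induced subgraph on `s` is a complete bipartite graph (biclique). -/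
def IsBiclique {V : Type*} [DecidableEq V] (G : SimpleGraph V) (s : Finset V) : Prop :=
  ∃ A B : Finset V, A.Nonempty ∧ B.Nonempty ∧ Disjoint A B ∧ A ∪ B = s ∧
    ∀ a ∈ s, ∀ b ∈ s, (G.Adj a b ↔ ((a ∈ A ∧ b ∈ B) ∨ (a ∈ B ∧ b ∈ A)))

/-- `s` (as an induced subgraph of `G`) is bi-dismantlable: a biclique can be obtained
by successively deleting bi-dominated vertices. -/
inductive BiDismantlable {V : Type*} [DecidableEq V] (G : SimpleGraph V) : Finset V → Prop
  | biclique (s : Finset V) : IsBiclique G s → BiDismantlable G s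
  | step (s : Finset V) (v u : V) : BiDominatedIn G s v u →
      BiDismantlable G (s.erase v) → BiDismantlable G s

/-
Induction on a dismantling sequence of `s`. If its first deleted vertex `w` (dominated by `x`)
is `v` there is nothing to do. Otherwise `v` keeps a dominator in `s \ w` (namely `u`, or `x`
when `u = w`), so `s \ {w, v}` is dismantlable by induction, and symmetrically `w` keeps a
dominator in `s \ v`, so it can be deleted first. The only exception is `u = w`, `x = v`: then
`v` and `w` are twins in `s`, and swapping them maps `s \ w` isomorphically onto `s \ v`.
At the end of the sequence, deleting a dominated vertex from a biclique leaves a biclique,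
because a vertex is never dominated by a vertex of the other side.
-/

namespace BiDominatedIn

variable {V : Type*} {G : SimpleGraph V} {s : Finset V} {v u x : V}

lemma trans (hvu : BiDominatedIn G s v u) (hux : BiDominatedIn G s u x) (hvx : v ≠ x) :
    BiDominatedIn G s v x :=
  ⟨hvu.1, hux.2.1, hvx, fun y hy hvy => hux.2.2.2 y hy (hvu.2.2.2 y hy hvy)⟩

lemma erase [DecidableEq V] {w : V} (h : BiDominatedIn G s v u) (hwv : w ≠ v) (hwu : w ≠ u) :
    BiDominatedIn G (s.erase w) v u :=
  ⟨Finset.mem_erase.2 ⟨hwv.symm, h.1⟩, Finset.mem_erase.2 ⟨hwu.symm, h.2.1⟩, h.2.2.1,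
    fun y hy => h.2.2.2 y (Finset.mem_of_mem_erase hy)⟩

/-- Unless `v` and `w` dominate each other, `v` stays dominated after deleting `w`. -/
lemma exists_erase [DecidableEq V] {w : V} (hvu : BiDominatedIn G s v u)
    (hwx : BiDominatedIn G s w x) (hvw : v ≠ w) (hnot_twin : ¬(u = w ∧ x = v)) :
    ∃ u', BiDominatedIn G (s.erase w) v u' := by
  by_cases huw : u = w
  · subst huw
    have hxv : x ≠ v := fun h => hnot_twin ⟨rfl, h⟩
    exact ⟨x, (hvu.trans hwx hxv.symm).erase hvw.symm hwx.2.2.1⟩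
  · exact ⟨u, hvu.erase hvw.symm (Ne.symm huw)⟩

lemma adj_swap_swap_iff [DecidableEq V] {w a b : V} (hvw : BiDominatedIn G s v w)
    (hwv : BiDominatedIn G s w v) (ha : a ∈ s) (hb : b ∈ s) :
    G.Adj (Equiv.swap v w a) (Equiv.swap v w b) ↔ G.Adj a b := by
  have hleft : ∀ y ∈ s, ∀ z ∈ s, G.Adj (Equiv.swap v w y) z ↔ G.Adj y z := by
    intro y _ z hz
    rw [Equiv.swap_apply_def]
    split_ifs with hyv hyw
    · subst hyv; exact ⟨hwv.2.2.2 z hz, hvw.2.2.2 z hz⟩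
    · subst hyw; exact ⟨hvw.2.2.2 z hz, hwv.2.2.2 z hz⟩
    · rfl
  have hmem : Equiv.swap v w b ∈ s := by
    rw [Equiv.swap_apply_def]
    split_ifs
    exacts [hvw.2.1, hvw.1, hb]
  rw [hleft a ha _ hmem, G.adj_comm, hleft b hb a ha, G.adj_comm]

end BiDominatedIn

namespace IsBiclique

variable {V : Type*} [DecidableEq V] {G : SimpleGraph V} {s : Finset V}

lemma map {σ : V ≃ V} (hσ : ∀ a ∈ s, ∀ b ∈ s, G.Adj (σ a) (σ b) ↔ G.Adj a b)
    (hb : IsBiclique G s) : IsBiclique G (s.map σ) := by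
  obtain ⟨A, B, hA, hB, hAB, hU, hadj⟩ := hb
  refine ⟨A.map σ, B.map σ, hA.map, hB.map, (Finset.disjoint_map _).2 hAB,
    by rw [← Finset.map_union, hU], ?_⟩
  intro a' ha' b' hb'
  obtain ⟨a, ha, rfl⟩ := Finset.mem_map.1 ha'
  obtain ⟨b, hb, rfl⟩ := Finset.mem_map.1 hb'
  simp only [Equiv.coe_toEmbedding, Finset.mem_map_equiv, Equiv.symm_apply_apply]
  rw [hσ a ha b hb, hadj a ha b hb]

lemma erase {v u : V} (hb : IsBiclique G s) (hvu : BiDominatedIn G s v u) :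
    IsBiclique G (s.erase v) := by
  obtain ⟨A, B, hA, hB, hAB, hU, hadj⟩ := hb
  obtain ⟨hvs, hus, hne, hdom⟩ := hvu
  wlog hvA : v ∈ A generalizing A B
  · have hvB : v ∈ B := (Finset.mem_union.1 (hU ▸ hvs)).resolve_left hvA
    exact this B A hB hA hAB.symm (Finset.union_comm B A ▸ hU)
      (fun a ha b hb => (hadj a ha b hb).trans or_comm) hvB
  have hvB : v ∉ B := Finset.disjoint_left.1 hAB hvA
  -- `u` lies on the side of `v`: otherwise `v ~ u`, hence `u ~ u`.
  have huA : u ∈ A := by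
    refine (Finset.mem_union.1 (hU ▸ hus)).resolve_right fun huB => G.irrefl (v := u) ?_
    exact hdom u hus ((hadj v hvs u hus).2 (Or.inl ⟨hvA, huB⟩))
  refine ⟨A.erase v, B, ⟨u, Finset.mem_erase.2 ⟨hne.symm, huA⟩⟩, hB,
    Finset.disjoint_of_subset_left (Finset.erase_subset v A) hAB,
    by rw [← hU, Finset.erase_union_distrib, Finset.erase_eq_of_notMem hvB], ?_⟩
  intro a ha b hb
  rw [hadj a (Finset.mem_of_mem_erase ha) b (Finset.mem_of_mem_erase hb)]
  simp only [Finset.mem_erase, Finset.ne_of_mem_erase ha, Finset.ne_of_mem_erase hb, ne_eq,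
    not_false_eq_true, true_and]

end IsBiclique

namespace BiDismantlable

variable {V : Type*} [DecidableEq V] {G : SimpleGraph V} {s : Finset V}

lemma map {σ : V ≃ V} (hσ : ∀ a ∈ s, ∀ b ∈ s, G.Adj (σ a) (σ b) ↔ G.Adj a b)
    {t : Finset V} (hd : BiDismantlable G t) (hts : t ⊆ s) : BiDismantlable G (t.map σ) := by
  induction hd with
  | biclique t hb => exact .biclique _ (hb.map fun a ha b hb => hσ a (hts ha) b (hts hb))
  | step t a b hab _ ih =>
    have has := hts hab.1
    have hbs := hts hab.2.1
    refine .step _ (σ a) (σ b) ⟨Finset.mem_map_of_mem _ hab.1, Finset.mem_map_of_mem _ hab.2.1,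
      σ.injective.ne hab.2.2.1, ?_⟩ ?_
    · simp only [Finset.forall_mem_map, Equiv.coe_toEmbedding]
      intro y hy
      rw [hσ a has y (hts hy), hσ b hbs y (hts hy)]
      exact hab.2.2.2 y hy
    · rw [← Equiv.coe_toEmbedding, ← Finset.map_erase]
      exact ih ((Finset.erase_subset a t).trans hts)

lemma erase_of_twin {v w : V} (hvw : BiDominatedIn G s v w) (hwv : BiDominatedIn G s w v)
    (hd : BiDismantlable G (s.erase w)) : BiDismantlable G (s.erase v) := by
  have hs : s.map (Equiv.swap v w : V ↪ V) = s := by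
    refine Finset.map_perm fun a ha => ?_
    obtain ⟨-, rfl | rfl⟩ := Equiv.swap_apply_ne_self_iff.1 ha
    exacts [hvw.1, hwv.1]
  have himage := Finset.map_erase (Equiv.swap v w : V ↪ V) s w
  simp only [hs, Equiv.coe_toEmbedding, Equiv.swap_apply_right] at himage
  rw [← himage]
  exact hd.map (fun a ha b hb => hvw.adj_swap_swap_iff hwv ha hb) (Finset.erase_subset w s)

lemma erase_of_biDominatedIn (hd : BiDismantlable G s) {v u : V}
    (hvu : BiDominatedIn G s v u) : BiDismantlable G (s.erase v) := by
  induction hd generalizing v u with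
  | biclique s hb => exact .biclique _ (hb.erase hvu)
  | step s w x hwx hd ih =>
    by_cases hvw : v = w
    · exact hvw ▸ hd
    by_cases htwin : u = w ∧ x = v
    · obtain ⟨rfl, rfl⟩ := htwin
      exact hd.erase_of_twin hvu hwx
    obtain ⟨u', hvu'⟩ := hvu.exists_erase hwx hvw (by tauto)
    obtain ⟨x', hwx'⟩ := hwx.exists_erase hvu (Ne.symm hvw) (by tauto)
    exact .step _ w x' hwx' (Finset.erase_right_comm (s := s) ▸ ih hvu')

end BiDismantlable

/-- If a finite graph Γ is bi-dismantlable and `v` is bi-dominated in Γ by `u`,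
then Γ \ v is bi-dismantlable. -/
theorem biDismantlable_erase {V : Type*} [Fintype V] [DecidableEq V]
    (G : SimpleGraph V) (v u : V)
    (hdom : BiDominatedIn G Finset.univ v u)
    (hd : BiDismantlable G Finset.univ) :
    BiDismantlable G (Finset.univ.erase v) :=
  hd.erase_of_biDominatedIn hdom
end

section
/- A CAT(0) disc diagram D that is not a single vertex has at least two positively curved vertices on its boundary; if moreover D has no valence-1 vertices then it has at least four boundary vertices with curvature exactly π/2. -/
open Finset

/-- Combinatorial data of a disc diagram with square 2-cells: finite vertex set `V`,
`nedges` edges and `nsquares` square 2-cells; `valence v` is the number of edge-ends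
at `v` and `corners v` the number of corners of squares at `v`.  The Euler
characteristic is 1, edge-ends and corners are counted consistently, and the link of
each vertex is a disjoint union of `ncomp v ≥ 1` arcs if `v` is on the boundary
(`valence v = corners v + ncomp v`; `v` is a cutpoint exactly when `ncomp v ≥ 2`)
and a cycle if `v` is interior (`valence v = corners v`). -/
structure SquareDiscDiagram (V : Type*) [Fintype V] where
  valence : V → ℕ
  corners : V → ℕ
  onBoundary : V → Prop
  ncomp : V → ℕ
  nedges : ℕ
  nsquares : ℕ
  euler : (Fintype.card V : ℤ) - nedges + nsquares = 1
  handshake : ∑ v, valence v = 2 * nedges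
  corner_count : ∑ v, corners v = 4 * nsquares
  boundary_link : ∀ v, onBoundary v → 1 ≤ ncomp v ∧ valence v = corners v + ncomp v
  interior_link : ∀ v, ¬ onBoundary v → valence v = corners v

/-- Curvature κ(v) = 2π − δ(v)π + (ρ(v)/2)π of a vertex of a square disc diagram. -/
noncomputable def SquareDiscDiagram.curv {V : Type*} [Fintype V] (D : SquareDiscDiagram V) (v : V) : ℝ :=
  2 * Real.pi - (D.valence v : ℝ) * Real.pi + ((D.corners v : ℝ) / 2) * Real.pi

/-!
By Gauss–Bonnet the curvatures sum to `2π`. The CAT(0) condition makes every interior vertex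
nonpositively curved, so the positively curved vertices lie on the boundary and carry total
curvature at least `2π`. A boundary vertex whose link has `n ≥ 1` arcs and `ρ` corners has
curvature `(2 - n - ρ/2)π ≤ π`; it is positive only for `n = 1, ρ ≤ 1`, and then equals `π/2`
unless `ρ = 0`, i.e. the vertex has valence one. Counting gives at least two, resp. four, such
vertices.
-/

theorem Fintype.sum_le_ncard_pos_mul {ι : Type*} [Fintype ι] (f : ι → ℝ) {b : ℝ}
    (hb : ∀ i, 0 < f i → f i ≤ b) : ∑ i, f i ≤ {i | 0 < f i}.ncard * b := by
  classical
  rw [Set.ncard_eq_toFinset_card', Set.toFinset_ofPred]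
  calc ∑ i, f i
      = ∑ i with 0 < f i, f i + ∑ i with ¬ 0 < f i, f i :=
        (Finset.sum_filter_add_sum_filter_not _ _ _).symm
    _ ≤ ∑ i with 0 < f i, f i + 0 := by
        gcongr
        exact Finset.sum_nonpos fun i hi => not_lt.mp (mem_filter.mp hi).2
    _ ≤ #{i | 0 < f i} * b := by
        rw [add_zero, ← nsmul_eq_mul]
        exact Finset.sum_le_card_nsmul _ _ _ fun i hi => hb i (mem_filter.mp hi).2

namespace SquareDiscDiagram

variable {V : Type*} [Fintype V] (D : SquareDiscDiagram V)

theorem sum_curv : ∑ v, D.curv v = 2 * Real.pi := by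
  have hval : ∑ v, (D.valence v : ℝ) = 2 * D.nedges := by exact_mod_cast D.handshake
  have hcor : ∑ v, (D.corners v : ℝ) = 4 * D.nsquares := by exact_mod_cast D.corner_count
  have heuler : (Fintype.card V : ℝ) - D.nedges + D.nsquares = 1 := by exact_mod_cast D.euler
  simp only [curv, sum_add_distrib, sum_sub_distrib, sum_const, card_univ, nsmul_eq_mul,
    ← sum_mul, ← sum_div, hval, hcor]
  linear_combination 2 * Real.pi * heuler

theorem curv_of_onBoundary {v : V} (hv : D.onBoundary v) :
    D.curv v = (2 - D.ncomp v - D.corners v / 2) * Real.pi := by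
  rw [curv, (D.boundary_link v hv).2]
  push_cast
  ring

theorem curv_of_not_onBoundary {v : V} (hv : ¬ D.onBoundary v) :
    D.curv v = (2 - D.corners v / 2) * Real.pi := by
  rw [curv, D.interior_link v hv]
  ring

theorem curv_nonpos_of_not_onBoundary {v : V} (hv : ¬ D.onBoundary v)
    (hcorners : 4 ≤ D.corners v) : D.curv v ≤ 0 := by
  rw [D.curv_of_not_onBoundary hv]
  have : (4 : ℝ) ≤ D.corners v := by exact_mod_cast hcorners
  nlinarith [Real.pi_pos]

theorem curv_le_pi_of_onBoundary {v : V} (hv : D.onBoundary v) : D.curv v ≤ Real.pi := by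
  rw [D.curv_of_onBoundary hv]
  have : (1 : ℝ) ≤ D.ncomp v := by exact_mod_cast (D.boundary_link v hv).1
  nlinarith [Real.pi_pos, (D.corners v).cast_nonneg (α := ℝ)]

theorem curv_eq_pi_div_two_of_pos {v : V} (hv : D.onBoundary v) (hpos : 0 < D.curv v)
    (hval : D.valence v ≠ 1) : D.curv v = Real.pi / 2 := by
  obtain ⟨hncomp, hlink⟩ := D.boundary_link v hv
  rw [D.curv_of_onBoundary hv] at hpos ⊢
  have hlt : (2 * D.ncomp v + D.corners v : ℝ) < 4 := by
    nlinarith [(mul_pos_iff_of_pos_right Real.pi_pos).mp hpos]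
  have hlt' : 2 * D.ncomp v + D.corners v < 4 := by exact_mod_cast hlt
  obtain ⟨hn, hc⟩ : D.ncomp v = 1 ∧ D.corners v = 1 := by omega
  rw [hn, hc]
  norm_num
  ring

variable {D}

theorem onBoundary_of_curv_pos (hcat0 : ∀ v, ¬ D.onBoundary v → 4 ≤ D.corners v) {v : V}
    (hpos : 0 < D.curv v) : D.onBoundary v :=
  by_contra fun hv => (D.curv_nonpos_of_not_onBoundary hv (hcat0 v hv)).not_gt hpos

end SquareDiscDiagram

open SquareDiscDiagram

theorem greendlinger_cat0_general {V : Type*} [Fintype V] (D : SquareDiscDiagram V)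
    (hcat0 : ∀ v, ¬ D.onBoundary v → 4 ≤ D.corners v) :
    2 ≤ {v : V | D.onBoundary v ∧ 0 < D.curv v}.ncard ∧
    ((∀ v : V, D.valence v ≠ 1) →
      4 ≤ {v : V | D.onBoundary v ∧ D.curv v = Real.pi / 2}.ncard) := by
  have hbdry : ∀ v, 0 < D.curv v → D.onBoundary v := fun _ => onBoundary_of_curv_pos hcat0
  have hcount (b : ℝ) (hb : ∀ v, 0 < D.curv v → D.curv v ≤ b) :
      2 * Real.pi ≤ {v | 0 < D.curv v}.ncard * b :=
    D.sum_curv ▸ Fintype.sum_le_ncard_pos_mul D.curv hb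
  constructor
  · have h2 : (2 : ℝ) ≤ {v | 0 < D.curv v}.ncard := le_of_mul_le_mul_right
      (hcount _ fun v hv => D.curv_le_pi_of_onBoundary (hbdry v hv)) Real.pi_pos
    exact (Nat.cast_le.mp h2).trans (Set.ncard_le_ncard fun v hv => ⟨hbdry v hv, hv⟩)
  · intro hval
    have hhalf_pi v (hv : 0 < D.curv v) : D.curv v = Real.pi / 2 :=
      D.curv_eq_pi_div_two_of_pos (hbdry v hv) hv (hval v)
    have h4 : (4 : ℝ) ≤ {v | 0 < D.curv v}.ncard := le_of_mul_le_mul_right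
      (by linarith [hcount _ fun v hv => (hhalf_pi v hv).le]) (half_pos Real.pi_pos)
    exact (Nat.cast_le.mp h4).trans
      (Set.ncard_le_ncard fun v hv => ⟨hbdry v hv, hhalf_pi v hv⟩)

/-- Greendlinger's lemma for CAT(0) disc diagrams: if every interior vertex is
incident to at least four squares and the diagram is not a single vertex, then at
least two boundary vertices are positively curved; if moreover there is no
valence-1 vertex, at least four boundary vertices have curvature exactly π/2. -/
theorem greendlinger_cat0 {V : Type*} [Fintype V] (D : SquareDiscDiagram V)
    (hnv : ¬ (Fintype.card V = 1 ∧ D.nedges = 0))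
    (hcat0 : ∀ v, ¬ D.onBoundary v → 4 ≤ D.corners v) :
    2 ≤ {v : V | D.onBoundary v ∧ 0 < D.curv v}.ncard ∧
    ((∀ v : V, D.valence v ≠ 1) →
      4 ≤ {v : V | D.onBoundary v ∧ D.curv v = Real.pi / 2}.ncard) :=
  greendlinger_cat0_general D hcat0
end

section
/- Let D be a C(4)-T(4) disc diagram that is not a single 0-cell or a single 2-cell, having no spurs, and in which every boundary 2-cell has at least three nodes on its boundary. Then D has at least four boundary 2-cells with exactly three nodes on their boundary. -/
/-!
Combinatorial Gauss–Bonnet: the curvatures of the nodes and 2-cells add up to `2π`.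
Under T(4) and the absence of spurs every node has nonpositive curvature, and under C(4)
every 2-cell except a boundary 2-cell with three nodes has nonpositive curvature, while
those contribute exactly `π/2` each. Hence at least four of them are needed to reach `2π`.
-/

open Finset

/-- Combinatorial data of a disc diagram decomposed into nodes, arcs and 2-cells:
`N` is the finite set of nodes (0-cells of valence ≠ 2), `narcs` the number of arcs,
`F` the finite set of 2-cells; `valence v` is the number of arc-ends at the node `v`,
`rho v` the number of 2-cells incident to `v`, and `nu c` the number of nodes on the
boundary of the 2-cell `c`.  The Euler characteristic is 1 and incidences are counted
consistently. -/
structure NodeArcDiscDiagram (N F : Type*) [Fintype N] [Fintype F] where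
  valence : N → ℕ
  rho : N → ℕ
  nu : F → ℕ
  narcs : ℕ
  euler : (Fintype.card N : ℤ) - narcs + Fintype.card F = 1
  handshake : ∑ v, valence v = 2 * narcs
  incidence : ∑ v, rho v = ∑ c, nu c

/-- Curvature κ(v) = 2π − δ(v)π + (ρ(v)/2)π of a node. -/
noncomputable def NodeArcDiscDiagram.nodeCurv {N F : Type*} [Fintype N] [Fintype F]
    (D : NodeArcDiscDiagram N F) (v : N) : ℝ :=
  2 * Real.pi - (D.valence v : ℝ) * Real.pi + ((D.rho v : ℝ) / 2) * Real.pi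

/-- Curvature κ(F) = 2π − (ν(F)/2)π of a 2-cell. -/
noncomputable def NodeArcDiscDiagram.cellCurv {N F : Type*} [Fintype N] [Fintype F]
    (D : NodeArcDiscDiagram N F) (c : F) : ℝ :=
  2 * Real.pi - ((D.nu c : ℝ) / 2) * Real.pi

/-- A disc diagram with its boundary data: which nodes lie on the boundary and which
2-cells are boundary 2-cells (have a boundary arc).  Interior nodes have as many
incident 2-cells as arcs; boundary nodes have strictly fewer; nodes never have
valence 2. -/
structure BoundedDiscDiagram (N F : Type*) [Fintype N] [Fintype F]
    extends NodeArcDiscDiagram N F where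
  boundaryNode : N → Prop
  boundaryCell : F → Prop
  node_valence_ne_two : ∀ v : N, valence v ≠ 2
  interior_rho : ∀ v : N, ¬ boundaryNode v → rho v = valence v
  boundary_rho : ∀ v : N, boundaryNode v → rho v < valence v

open Real

namespace NodeArcDiscDiagram

variable {N F : Type*} [Fintype N] [Fintype F] (D : NodeArcDiscDiagram N F)

theorem sum_nodeCurv_add_sum_cellCurv :
    ∑ v, D.nodeCurv v + ∑ c, D.cellCurv c = 2 * π := by
  have handshake : ∑ v, (D.valence v : ℝ) = 2 * D.narcs := by exact_mod_cast D.handshake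
  have incidence : ∑ v, (D.rho v : ℝ) = ∑ c, (D.nu c : ℝ) := by exact_mod_cast D.incidence
  have euler : (Fintype.card N : ℝ) - D.narcs + Fintype.card F = 1 := by exact_mod_cast D.euler
  simp only [nodeCurv, cellCurv, sum_add_distrib, sum_sub_distrib, sum_const, card_univ,
    nsmul_eq_mul, ← sum_mul, ← sum_div, handshake, incidence]
  linear_combination 2 * π * euler

theorem nodeCurv_nonpos_of_rho_eq {v : N} (hρ : D.rho v = D.valence v)
    (hδ : 4 ≤ D.valence v) : D.nodeCurv v ≤ 0 := by
  have hδ' : (4 : ℝ) ≤ D.valence v := by exact_mod_cast hδ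
  rw [nodeCurv, hρ]
  nlinarith [pi_pos]

theorem nodeCurv_nonpos_of_rho_lt {v : N} (hρ : D.rho v < D.valence v)
    (hδ : 3 ≤ D.valence v) : D.nodeCurv v ≤ 0 := by
  have hρ' : (D.rho v : ℝ) + 1 ≤ D.valence v := by exact_mod_cast hρ
  have hδ' : (3 : ℝ) ≤ D.valence v := by exact_mod_cast hδ
  rw [nodeCurv]
  nlinarith [pi_pos]

theorem cellCurv_nonpos_of_four_le {c : F} (hν : 4 ≤ D.nu c) : D.cellCurv c ≤ 0 := by
  have hν' : (4 : ℝ) ≤ D.nu c := by exact_mod_cast hν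
  rw [cellCurv]
  nlinarith [pi_pos]

theorem cellCurv_le_pi_div_two_of_three_le {c : F} (hν : 3 ≤ D.nu c) :
    D.cellCurv c ≤ π / 2 := by
  have hν' : (3 : ℝ) ≤ D.nu c := by exact_mod_cast hν
  rw [cellCurv]
  nlinarith [pi_pos]

theorem four_le_card_of_curv_le {S : Finset F} (hnode : ∀ v, D.nodeCurv v ≤ 0)
    (hcell : ∀ c ∉ S, D.cellCurv c ≤ 0) (hS : ∀ c ∈ S, D.cellCurv c ≤ π / 2) :
    4 ≤ S.card := by
  classical
  have hnodes : ∑ v, D.nodeCurv v ≤ 0 := sum_nonpos fun v _ => hnode v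
  have hcells : ∑ c, D.cellCurv c ≤ S.card * (π / 2) :=
    calc ∑ c, D.cellCurv c ≤ ∑ c, if c ∈ S then π / 2 else 0 := by
          refine sum_le_sum fun c _ => ?_
          split_ifs with hc
          exacts [hS c hc, hcell c hc]
      _ = S.card * (π / 2) := by
          rw [sum_ite_mem, univ_inter, sum_const, nsmul_eq_mul]
  have hπ : 2 * π ≤ S.card * (π / 2) := by
    linarith [D.sum_nodeCurv_add_sum_cellCurv]
  have : (4 : ℝ) ≤ S.card := by nlinarith [pi_pos]
  exact_mod_cast this

end NodeArcDiscDiagram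

namespace BoundedDiscDiagram

variable {N F : Type*} [Fintype N] [Fintype F] (D : BoundedDiscDiagram N F)

theorem nodeCurv_nonpos (hT4 : ∀ v, ¬ D.boundaryNode v → 4 ≤ D.valence v)
    (hnospur : ∀ v, D.valence v ≠ 1) (hnot0cell : ∀ v, D.valence v ≠ 0) (v : N) :
    D.nodeCurv v ≤ 0 := by
  by_cases hv : D.boundaryNode v
  · have h2 := D.node_valence_ne_two v
    exact D.nodeCurv_nonpos_of_rho_lt (D.boundary_rho v hv)
      (by have := hnospur v; have := hnot0cell v; omega)
  · exact D.nodeCurv_nonpos_of_rho_eq (D.interior_rho v hv) (hT4 v hv)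

end BoundedDiscDiagram

theorem greendlinger_cftf_general {N F : Type*} [Fintype N] [Fintype F]
    (D : BoundedDiscDiagram N F)
    (hC4 : ∀ c : F, ¬ D.boundaryCell c → 4 ≤ D.nu c)
    (hT4 : ∀ v : N, ¬ D.boundaryNode v → 4 ≤ D.valence v)
    (hnospur : ∀ v : N, D.valence v ≠ 1)
    (hnot0cell : ∀ v : N, D.valence v ≠ 0)
    (hb3 : ∀ c : F, D.boundaryCell c → 3 ≤ D.nu c) :
    4 ≤ {c : F | D.boundaryCell c ∧ D.nu c = 3}.ncard := by
  classical
  set S : Finset F := univ.filter fun c => D.boundaryCell c ∧ D.nu c = 3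
  rw [show {c : F | D.boundaryCell c ∧ D.nu c = 3} = S by ext; simp [S],
    Set.ncard_coe_finset]
  refine D.four_le_card_of_curv_le (D.nodeCurv_nonpos hT4 hnospur hnot0cell) ?_ ?_
  · intro c hc
    simp only [S, mem_filter, mem_univ, true_and, not_and] at hc
    refine D.cellCurv_nonpos_of_four_le ?_
    by_cases hb : D.boundaryCell c
    · have := hb3 c hb; have := hc hb; omega
    · exact hC4 c hb
  · intro c hc
    simp only [S, mem_filter, mem_univ, true_and] at hc
    exact D.cellCurv_le_pi_div_two_of_three_le (hb3 c hc.1)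

/-- Greendlinger's lemma for C(4)-T(4) disc diagrams: a C(4)-T(4) disc diagram which
is not a single 0-cell or 2-cell, has no spurs, and all of whose boundary 2-cells
have at least three nodes, has at least four boundary 2-cells with exactly three
nodes on their boundary. -/
theorem greendlinger_cftf {N F : Type*} [Fintype N] [Fintype F]
    (D : BoundedDiscDiagram N F)
    (hC4 : ∀ c : F, ¬ D.boundaryCell c → 4 ≤ D.nu c)
    (hT4 : ∀ v : N, ¬ D.boundaryNode v → 4 ≤ D.valence v)
    (hnospur : ∀ v : N, D.valence v ≠ 1)
    (hnot0cell : ∀ v : N, D.valence v ≠ 0)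
    (hnot2cell : ∀ c : F, 1 ≤ D.nu c)
    (hb3 : ∀ c : F, D.boundaryCell c → 3 ≤ D.nu c) :
    4 ≤ {c : F | D.boundaryCell c ∧ D.nu c = 3}.ncard :=
  greendlinger_cftf_general D hC4 hT4 hnospur hnot0cell hb3
end
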